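/- Let ψ(x) = B₀x + b₀ + φ(x) with φ Lipschitz with constant L < σ_min(B₀), x* the zero of ψ, and γ > 0, λ ∈ (0,1). Then for all x with ψ(x) ≠ 0: γ⟨x − x*, B₀ᵀψ(x)⟩ / ‖γB₀ᵀψ(x)‖^{1−λ} ≥ (γ^λ / (2‖B₀‖^{1−λ})) (σ_min(B₀) − L)^{1+λ} ‖x − x*‖^{1+λ}. -/

import Mathlib

/-
Write `e = x - x*` and `p = ψ x`; then `p = B₀ e + d` with `d = φ x - φ x*`, and
`‖d‖ ≤ L ‖e‖ ≤ σ_min ‖e‖ ≤ ‖B₀ e‖`. Expanding `‖B₀ e - p‖² = ‖d‖²` therefore gives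
`⟨e, B₀ᵀ p⟩ = ⟨B₀ e, p⟩ ≥ ‖p‖² / 2`, while `‖B₀ᵀ p‖ ≤ ‖B₀‖ ‖p‖` and
`‖p‖ ≥ (σ_min - L) ‖e‖`. Splitting `γ = γ^λ γ^(1-λ)` and `‖p‖² = ‖p‖^(1+λ) ‖p‖^(1-λ)`, the
three estimates combine into the claimed bound.
-/

noncomputable def mApp {n : ℕ} (B : Matrix (Fin n) (Fin n) ℝ) (x : EuclideanSpace ℝ (Fin n)) :
    EuclideanSpace ℝ (Fin n) := Matrix.toEuclideanCLM (𝕜 := ℝ) B x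

noncomputable def specNorm {n : ℕ} (B : Matrix (Fin n) (Fin n) ℝ) : ℝ :=
  ‖Matrix.toEuclideanCLM (𝕜 := ℝ) B‖

noncomputable def sigmaMin {n : ℕ} (B : Matrix (Fin n) (Fin n) ℝ) : ℝ :=
  sInf {r : ℝ | ∃ v : EuclideanSpace ℝ (Fin n), ‖v‖ = 1 ∧ r = ‖mApp B v‖}

def vabs {n : ℕ} (v : EuclideanSpace ℝ (Fin n)) : EuclideanSpace ℝ (Fin n) := WithLp.toLp 2 (fun i => |v i|)

open Matrix

theorem norm_sq_div_two_le_inner_of_norm_sub_le {F : Type*} [NormedAddCommGroup F]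
    [InnerProductSpace ℝ F] {u v : F} (h : ‖v - u‖ ≤ ‖v‖) : ‖u‖ ^ 2 / 2 ≤ inner ℝ v u := by
  have hsq : ‖v - u‖ ^ 2 ≤ ‖v‖ ^ 2 := pow_le_pow_left₀ (norm_nonneg _) h 2
  linarith [norm_sub_sq_real v u]

theorem le_mul_div_rpow_of_bounds {γ lam a w S P c r : ℝ} (hγ : 0 < γ) (hlam : -1 ≤ lam)
    (hlam' : lam ≤ 1) (hP : 0 < P) (ha : P ^ 2 / 2 ≤ a) (hw : 0 < w) (hwP : w ≤ S * P)
    (hc : 0 ≤ c) (hr : 0 ≤ r) (hcr : c * r ≤ P) :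
    γ ^ lam / (2 * S ^ (1 - lam)) * c ^ (1 + lam) * r ^ (1 + lam) ≤ γ * a / (γ * w) ^ (1 - lam) := by
  have hS : 0 < S := pos_of_mul_pos_left (hw.trans_le hwP) hP.le
  have ha0 : 0 ≤ a := (by positivity : (0 : ℝ) ≤ P ^ 2 / 2).trans ha
  have hγsplit : γ ^ lam * γ ^ (1 - lam) = γ := by rw [← Real.rpow_add hγ]; norm_num
  have hPsplit : P ^ (1 + lam) * P ^ (1 - lam) = P ^ 2 := by
    rw [← Real.rpow_add hP, ← Real.rpow_natCast]; norm_num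
  have hsplit : γ ^ lam / (2 * S ^ (1 - lam)) * P ^ (1 + lam)
      = γ * (P ^ 2 / 2) / (γ * (S * P)) ^ (1 - lam) := by
    rw [Real.mul_rpow hγ.le (by positivity), Real.mul_rpow hS.le hP.le, ← hPsplit]
    field_simp
    exact hγsplit
  calc γ ^ lam / (2 * S ^ (1 - lam)) * c ^ (1 + lam) * r ^ (1 + lam)
      = γ ^ lam / (2 * S ^ (1 - lam)) * (c * r) ^ (1 + lam) := by
        rw [Real.mul_rpow hc hr, mul_assoc]
    _ ≤ γ ^ lam / (2 * S ^ (1 - lam)) * P ^ (1 + lam) := by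
        gcongr
        linarith
    _ = γ * (P ^ 2 / 2) / (γ * (S * P)) ^ (1 - lam) := hsplit
    _ ≤ γ * a / (γ * w) ^ (1 - lam) := by gcongr

section

variable {n : ℕ}

theorem sigmaMin_mul_norm_le (B : Matrix (Fin n) (Fin n) ℝ) (v : EuclideanSpace ℝ (Fin n)) :
    sigmaMin B * ‖v‖ ≤ ‖mApp B v‖ := by
  rcases eq_or_ne v 0 with rfl | hv
  · simp [mApp]
  have hunit : ‖‖v‖⁻¹ • v‖ = 1 := norm_smul_inv_norm (𝕜 := ℝ) hv
  have hle : sigmaMin B ≤ ‖mApp B (‖v‖⁻¹ • v)‖ :=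
    csInf_le ⟨0, by rintro _ ⟨w, -, rfl⟩; positivity⟩ ⟨_, hunit, rfl⟩
  rwa [mApp, map_smul, norm_smul, norm_inv, norm_norm, ← div_eq_inv_mul,
    le_div_iff₀ (norm_pos_iff.2 hv)] at hle

theorem toEuclideanCLM_transpose (B : Matrix (Fin n) (Fin n) ℝ) :
    toEuclideanCLM (𝕜 := ℝ) Bᵀ = ContinuousLinearMap.adjoint (toEuclideanCLM (𝕜 := ℝ) B) := by
  rw [← conjTranspose_eq_transpose_of_trivial, ← star_eq_conjTranspose, map_star,
    ContinuousLinearMap.star_eq_adjoint]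

theorem inner_mApp_transpose (B : Matrix (Fin n) (Fin n) ℝ) (y z : EuclideanSpace ℝ (Fin n)) :
    inner ℝ y (mApp Bᵀ z) = inner ℝ (mApp B y) z := by
  rw [mApp, mApp, toEuclideanCLM_transpose, ContinuousLinearMap.adjoint_inner_right]

theorem norm_mApp_transpose_le (B : Matrix (Fin n) (Fin n) ℝ) (z : EuclideanSpace ℝ (Fin n)) :
    ‖mApp Bᵀ z‖ ≤ specNorm B * ‖z‖ := by
  calc ‖mApp Bᵀ z‖ ≤ ‖toEuclideanCLM (𝕜 := ℝ) Bᵀ‖ * ‖z‖ := ContinuousLinearMap.le_opNorm _ _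
    _ = specNorm B * ‖z‖ := by rw [toEuclideanCLM_transpose, LinearIsometryEquiv.norm_map, specNorm]

end

theorem stmt_19 {n : ℕ} (B₀ : Matrix (Fin n) (Fin n) ℝ) (b₀ : EuclideanSpace ℝ (Fin n))
    (φ : EuclideanSpace ℝ (Fin n) → EuclideanSpace ℝ (Fin n)) (L : ℝ)
    (hφ : ∀ x y, ‖φ x - φ y‖ ≤ L * ‖x - y‖) (hσ : L < sigmaMin B₀)
    (ψ : EuclideanSpace ℝ (Fin n) → EuclideanSpace ℝ (Fin n))
    (hψ : ∀ x, ψ x = mApp B₀ x + b₀ + φ x)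
    (xs : EuclideanSpace ℝ (Fin n)) (hxs : ψ xs = 0)
    (γ lam : ℝ) (hγ : 0 < γ) (hlam : 0 < lam) (hlam' : lam < 1) :
    ∀ x : EuclideanSpace ℝ (Fin n), ψ x ≠ 0 →
      γ * (inner ℝ (x - xs) (mApp B₀.transpose (ψ x)) : ℝ) / ‖γ • mApp B₀.transpose (ψ x)‖ ^ (1 - lam) ≥
        γ ^ lam / (2 * specNorm B₀ ^ (1 - lam)) * (sigmaMin B₀ - L) ^ (1 + lam) *
          ‖x - xs‖ ^ (1 + lam) := by
  intro x hx
  have hp : 0 < ‖ψ x‖ := norm_pos_iff.2 hx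
  have hdecomp : ψ x - mApp B₀ (x - xs) = φ x - φ xs := by
    rw [← sub_zero (ψ x), ← hxs, hψ, hψ]
    simp only [mApp, map_sub]
    abel
  have hφx : ‖φ x - φ xs‖ ≤ sigmaMin B₀ * ‖x - xs‖ :=
    (hφ x xs).trans (mul_le_mul_of_nonneg_right hσ.le (norm_nonneg _))
  have hBe := sigmaMin_mul_norm_le B₀ (x - xs)
  have hinner : ‖ψ x‖ ^ 2 / 2 ≤ inner ℝ (x - xs) (mApp B₀ᵀ (ψ x)) := by
    rw [inner_mApp_transpose]
    apply norm_sq_div_two_le_inner_of_norm_sub_le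
    rw [norm_sub_rev, hdecomp]
    linarith
  have hψx : (sigmaMin B₀ - L) * ‖x - xs‖ ≤ ‖ψ x‖ := by
    have htri := norm_le_norm_add_norm_sub (ψ x) (mApp B₀ (x - xs))
    rw [hdecomp] at htri
    linarith [hφ x xs]
  have hpos : 0 < ‖mApp B₀ᵀ (ψ x)‖ := by
    refine norm_pos_iff.2 fun h => ?_
    rw [h, inner_zero_right] at hinner
    linarith [pow_pos hp 2]
  rw [ge_iff_le, norm_smul, Real.norm_of_nonneg hγ.le]
  exact le_mul_div_rpow_of_bounds hγ (by linarith) hlam'.le hp hinner hpos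
    (norm_mApp_transpose_le B₀ (ψ x)) (by linarith) (norm_nonneg _) hψx
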